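/- Let G be a group, Γ a subgroup of G, and Δ a subset of G such that for all m ∈ Δ and γ ∈ Γ there exists a unique element m⋆γ ∈ Δ with mγ ∈ Γ·(m⋆γ); define I_m(γ) := (mγ)(m⋆γ)^{−1} ∈ Γ. Let ρ and ρ' be representations of Γ on complex vector spaces V and V'. Then the linear map π : (V ⊗ ℂ[Δ]) ⊗ (V' ⊗ ℂ[Δ]) → (V ⊗ V') ⊗ ℂ[Δ] determined by (v ⊗ e_m) ⊗ (w ⊗ e_{m'}) ↦ (v ⊗ w) ⊗ e_m if m = m' and ↦ 0 otherwise, is a surjective Γ-equivariant map from (T_Δρ) ⊗ (T_Δρ') onto T_Δ(ρ ⊗ ρ'). -/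

import Mathlib

/-!
On basis tensors `(v ⊗ e_m) ⊗ (w ⊗ e_{m'})` both `π ∘ (T_Δρ ⊗ T_Δρ')(γ)` and `T_Δ(ρ ⊗ ρ')(γ) ∘ π`
vanish off the diagonal and agree on it, provided `m ↦ m ⋆ γ⁻¹` is injective. By the uniqueness
of `m ⋆ γ`, the map `m ↦ m ⋆ γ` is a left inverse of it. Surjectivity is clear, since
`(v ⊗ e_m) ⊗ (w ⊗ e_m) ↦ (v ⊗ w) ⊗ e_m`.
-/

open TensorProduct

/-!
Abstract Hecke-transversal setting: `G` a group, `Γ ≤ G`, `Δ ⊆ G`, and for each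
`m ∈ Δ`, `γ ∈ Γ` a unique `m⋆γ ∈ Δ` with `m·γ ∈ Γ·(m⋆γ)`; `I_m(γ) := (mγ)(m⋆γ)⁻¹ ∈ Γ`.
The data is encoded by functions `star : Δ → Γ → Δ` and `I : Δ → Γ → Γ` subject to
`hstar : ↑m * ↑γ = ↑(I m γ) * ↑(star m γ)` together with the uniqueness hypothesis
`huniq`.
-/

/-- The vector-valued Hecke operator on representations: `(T_Δ ρ)(γ)` is the linear
endomorphism of `V ⊗ ℂ[Δ]` sending `v ⊗ e_m` to `ρ(I_m(γ⁻¹)⁻¹) v ⊗ e_{m⋆γ⁻¹}`. -/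
noncomputable def heckeRep {G : Type} [Group G] {Γ : Subgroup G} {Δ : Set G}
    {V : Type} [AddCommGroup V] [Module ℂ V] (ρ : Representation ℂ Γ V)
    (star : Δ → Γ → Δ) (I : Δ → Γ → Γ) (γ : Γ) :
    (V ⊗[ℂ] (Δ →₀ ℂ)) →ₗ[ℂ] (V ⊗[ℂ] (Δ →₀ ℂ)) :=
  letI : DecidableEq ↥Δ := Classical.decEq _
  ((TensorProduct.finsuppScalarRight ℂ ℂ V ↥Δ).symm.toLinearMap).comp
    ((Finsupp.lsum ℂ fun m : ↥Δ =>
        (Finsupp.lsingle (star m γ⁻¹)).comp (ρ ((I m γ⁻¹)⁻¹))).comp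
      (TensorProduct.finsuppScalarRight ℂ ℂ V ↥Δ).toLinearMap)

/-- The projection `π : (V ⊗ ℂ[Δ]) ⊗ (V′ ⊗ ℂ[Δ]) → (V ⊗ V′) ⊗ ℂ[Δ]` determined by
`(v ⊗ e_m) ⊗ (w ⊗ e_{m′}) ↦ (v ⊗ w) ⊗ e_m` if `m = m′` and `0` otherwise. -/
noncomputable def heckeProj {G : Type} [Group G] {Δ : Set G}
    {V V' : Type} [AddCommGroup V] [Module ℂ V] [AddCommGroup V'] [Module ℂ V'] :
    ((V ⊗[ℂ] (Δ →₀ ℂ)) ⊗[ℂ] (V' ⊗[ℂ] (Δ →₀ ℂ))) →ₗ[ℂ] ((V ⊗[ℂ] V') ⊗[ℂ] (Δ →₀ ℂ)) :=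
  letI : DecidableEq ↥Δ := Classical.decEq _
  ((TensorProduct.finsuppScalarRight ℂ ℂ (V ⊗[ℂ] V') ↥Δ).symm.toLinearMap).comp
    ((Finsupp.lsum ℂ fun p : ↥Δ × ↥Δ =>
        if p.1 = p.2 then (Finsupp.lsingle p.1 : (V ⊗[ℂ] V') →ₗ[ℂ] (↥Δ →₀ V ⊗[ℂ] V')) else 0).comp
      ((finsuppTensorFinsupp ℂ ℂ V V' ↥Δ ↥Δ).toLinearMap.comp
        (TensorProduct.map (TensorProduct.finsuppScalarRight ℂ ℂ V ↥Δ).toLinearMap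
          (TensorProduct.finsuppScalarRight ℂ ℂ V' ↥Δ).toLinearMap)))

section

variable {G : Type} [Group G] {Γ : Subgroup G} {Δ : Set G}
  {V V' : Type} [AddCommGroup V] [Module ℂ V] [AddCommGroup V'] [Module ℂ V']

theorem finsuppScalarRight_tmul_single {R M ι : Type*} [CommSemiring R] [AddCommMonoid M]
    [Module R M] [DecidableEq ι] (m : M) (i : ι) :
    finsuppScalarRight R R M ι (m ⊗ₜ Finsupp.single i 1) = Finsupp.single i m := by
  rw [← finsuppScalarRight_symm_apply_single (S := R), LinearEquiv.apply_symm_apply]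

theorem heckeRep_tmul_single (ρ : Representation ℂ Γ V) (star : Δ → Γ → Δ) (I : Δ → Γ → Γ)
    (γ : Γ) (v : V) (m : Δ) :
    heckeRep ρ star I γ (v ⊗ₜ Finsupp.single m 1) =
      ρ (I m γ⁻¹)⁻¹ v ⊗ₜ Finsupp.single (star m γ⁻¹) 1 := by
  let : DecidableEq Δ := Classical.decEq _
  simp only [heckeRep, LinearMap.comp_apply, LinearEquiv.coe_toLinearMap,
    finsuppScalarRight_tmul_single, Finsupp.lsum_single]
  exact finsuppScalarRight_symm_apply_single _ _

theorem heckeProj_tmul_single (v : V) (w : V') (m m' : Δ) [Decidable (m = m')] :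
    heckeProj ((v ⊗ₜ[ℂ] Finsupp.single m 1) ⊗ₜ[ℂ] (w ⊗ₜ[ℂ] Finsupp.single m' 1)) =
      if m = m' then (v ⊗ₜ[ℂ] w) ⊗ₜ[ℂ] Finsupp.single m (1 : ℂ) else 0 := by
  let : DecidableEq Δ := Classical.decEq _
  simp only [heckeProj, LinearMap.comp_apply, LinearEquiv.coe_toLinearMap, map_tmul,
    finsuppScalarRight_tmul_single, finsuppTensorFinsupp_single, Finsupp.lsum_single]
  split_ifs <;> simp [finsuppScalarRight_symm_apply_single]

theorem tmul_single_mem_range_heckeProj (t : V ⊗[ℂ] V') (m : Δ) :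
    t ⊗ₜ Finsupp.single m 1 ∈ LinearMap.range (heckeProj (V := V) (V' := V')) := by
  classical
  induction t using TensorProduct.induction_on with
  | zero => simp
  | tmul v w => exact ⟨_, (heckeProj_tmul_single v w m m).trans (if_pos rfl)⟩
  | add a b ha hb => rw [add_tmul]; exact add_mem ha hb

theorem heckeProj_surjective :
    Function.Surjective (heckeProj (Δ := Δ) (V := V) (V' := V')) := by
  rw [← LinearMap.range_eq_top, eq_top_iff, ← span_tmul_eq_top, Submodule.span_le]
  rintro _ ⟨t, f, rfl⟩
  induction f using Finsupp.induction_linear with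
  | zero => simp
  | add f g hf hg => rw [tmul_add]; exact add_mem hf hg
  | single m c =>
    rw [← mul_one c, ← smul_eq_mul, ← Finsupp.smul_single, tmul_smul]
    exact Submodule.smul_mem _ c (tmul_single_mem_range_heckeProj t m)

theorem heckeProj_comp_map_heckeRep (ρ : Representation ℂ Γ V) (ρ' : Representation ℂ Γ V')
    (star : Δ → Γ → Δ) (I : Δ → Γ → Γ) (γ : Γ) (hinj : Function.Injective (star · γ⁻¹)) :
    heckeProj.comp (map (heckeRep ρ star I γ) (heckeRep ρ' star I γ)) =
      (heckeRep (ρ.tprod ρ') star I γ).comp heckeProj := by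
  classical
  ext v m w m'
  simp only [LinearMap.comp_apply, AlgebraTensorModule.curry_apply, curry_apply,
    LinearMap.coe_restrictScalars, Finsupp.lsingle_apply, map_tmul,
    heckeRep_tmul_single, heckeProj_tmul_single, hinj.eq_iff]
  split_ifs with h
  · subst h
    rw [heckeRep_tmul_single, Representation.tprod_apply, map_tmul]
  · rw [map_zero]

theorem star_star_inv (star : Δ → Γ → Δ) (I : Δ → Γ → Γ)
    (hstar : ∀ (m : Δ) (γ : Γ), (m : G) * (γ : G) = (I m γ : G) * (star m γ : G))
    (huniq : ∀ (m : Δ) (γ : Γ) (m' : Δ),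
      (∃ g : Γ, (m : G) * (γ : G) = (g : G) * (m' : G)) → m' = star m γ)
    (m : Δ) (γ : Γ) : star (star m γ) γ⁻¹ = m := by
  refine (huniq (star m γ) γ⁻¹ m ⟨(I m γ)⁻¹, ?_⟩).symm
  rw [Subgroup.coe_inv, Subgroup.coe_inv, eq_inv_mul_iff_mul_eq, ← mul_assoc, ← hstar,
    mul_inv_cancel_right]

end

open Classical in
/-- the linear map `π` determined by
`(v ⊗ e_m) ⊗ (w ⊗ e_{m′}) ↦ (v ⊗ w) ⊗ e_m` if `m = m′` (and `0` otherwise) is a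
surjective `Γ`-equivariant map from `(T_Δρ) ⊗ (T_Δρ′)` onto `T_Δ(ρ ⊗ ρ′)`. -/
theorem heckeProj_surjective_equivariant {G : Type} [Group G] (Γ : Subgroup G) (Δ : Set G)
    (star : Δ → Γ → Δ) (I : Δ → Γ → Γ)
    (hstar : ∀ (m : Δ) (γ : Γ), (m : G) * (γ : G) = (I m γ : G) * (star m γ : G))
    (huniq : ∀ (m : Δ) (γ : Γ) (m' : Δ),
      (∃ g : Γ, (m : G) * (γ : G) = (g : G) * (m' : G)) → m' = star m γ)
    {V V' : Type} [AddCommGroup V] [Module ℂ V] [AddCommGroup V'] [Module ℂ V']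
    (ρ : Representation ℂ Γ V) (ρ' : Representation ℂ Γ V') :
    (∀ (v : V) (w : V') (m m' : Δ),
        heckeProj ((v ⊗ₜ[ℂ] Finsupp.single m 1) ⊗ₜ[ℂ] (w ⊗ₜ[ℂ] Finsupp.single m' 1)) =
          if m = m' then (v ⊗ₜ[ℂ] w) ⊗ₜ[ℂ] Finsupp.single m (1 : ℂ) else 0) ∧
    Function.Surjective
      (heckeProj (Δ := Δ) (V := V) (V' := V')) ∧
    (∀ γ : Γ,
        (heckeProj (Δ := Δ) (V := V) (V' := V')).comp
            (TensorProduct.map (heckeRep ρ star I γ) (heckeRep ρ' star I γ)) =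
          (heckeRep (ρ.tprod ρ') star I γ).comp (heckeProj (Δ := Δ) (V := V) (V' := V'))) := by
  refine ⟨fun v w m m' => heckeProj_tmul_single v w m m', heckeProj_surjective, fun γ => ?_⟩
  have hinv : Function.LeftInverse (star · γ) (star · γ⁻¹) := fun m => by
    simpa using star_star_inv star I hstar huniq m γ⁻¹
  exact heckeProj_comp_map_heckeRep ρ ρ' star I γ hinv.injective
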